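/- arXiv:1203.4667 — 4 statements merged into one kernel-verified Lean document; each statement's English description precedes it below -/
import Mathlib

section
/- Let p ∈ ℕ, σ₁(x,y,λ) = (1 + tanh((x-1)·y·λ))/2, σ_p(x,y,λ) = Σ_{i=0}^{p-1} σ₁(x - i, y + ln p, λ), and int_p(x) = min(p, ⌊x⌋). For any x ≥ 0, y > 0, λ > 2: |int_p(x) - σ_p(x,y,λ)| ≤ 1/2 + e^{-y}. Furthermore, if x < 1 - 1/λ, or x > p + 1/λ, or the distance from x to the nearest natural number is at least 1/λ, then |int_p(x) - σ_p(x,y,λ)| ≤ e^{-y}. -/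
/-!
Writing `min p ⌊x⌋ = ∑_{i<p} [x ≥ i + 1]`, the error of the `i`-th summand is
`(1 - tanh (|x - i - 1| L λ)) / 2 ≤ min (1/2, exp (-2 |x - i - 1| L λ))` with `L = y + log p`.
Every index with `|x - i - 1| ≥ 1/λ` thus contributes at most `exp (-2L) = exp (-2y) / p²`, so all
of them together at most `exp (-2y) / p ≤ exp (-y)`. Since `2/λ < 1`, at most one index has
`|x - i - 1| < 1/λ`, and it contributes at most `1/2`; under each of the three extra conditions
there is no such index.
-/

open Real Finset

lemma one_sub_tanh_div_two_eq (t : ℝ) : (1 - tanh t) / 2 = (exp (2 * t) + 1)⁻¹ := by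
  rw [tanh_eq, show 2 * t = t + t by ring, exp_add, exp_neg]
  have := exp_pos t
  field_simp
  ring

lemma one_sub_tanh_div_two_le_half {t : ℝ} (ht : 0 ≤ t) : (1 - tanh t) / 2 ≤ 1 / 2 := by
  rw [one_sub_tanh_div_two_eq, one_div]
  gcongr
  linarith [one_le_exp (by positivity : 0 ≤ 2 * t)]

lemma one_sub_tanh_div_two_le_exp (t : ℝ) : (1 - tanh t) / 2 ≤ exp (-(2 * t)) := by
  rw [one_sub_tanh_div_two_eq, exp_neg]
  gcongr
  linarith

lemma abs_ite_nonneg_sub_one_add_tanh_div_two (z : ℝ) :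
    |(if 0 ≤ z then 1 else 0) - (1 + tanh z) / 2| = (1 - tanh |z|) / 2 := by
  rcases le_or_gt 0 z with hz | hz
  · rw [if_pos hz, abs_of_nonneg hz, abs_of_nonneg] <;> linarith [tanh_lt_one z]
  · rw [if_neg hz.not_ge, abs_of_neg hz, tanh_neg, zero_sub, abs_neg, abs_of_pos] <;>
      linarith [neg_one_lt_tanh z]

lemma min_floor_eq_sum_ite (p : ℕ) {x : ℝ} (hx : 0 ≤ x) :
    min (p : ℝ) ⌊x⌋ = ∑ i ∈ range p, if 0 ≤ x - i - 1 then (1 : ℝ) else 0 := by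
  have hiff (i : ℕ) : 0 ≤ x - i - 1 ↔ i < ⌊x⌋₊ := by
    rw [Nat.lt_iff_add_one_le, Nat.le_floor_iff hx]; push_cast; constructor <;> intro h <;> linarith
  have hrange : {i ∈ range p | i < ⌊x⌋₊} = range (min p ⌊x⌋₊) := by ext; simp
  simp_rw [hiff, sum_boole, hrange, card_range, Nat.cast_min, natCast_floor_eq_intCast_floor hx]

lemma abs_min_floor_sub_sum_le (p : ℕ) {x c : ℝ} (hx : 0 ≤ x) (hc : 0 < c) :
    |min (p : ℝ) ⌊x⌋ - ∑ i ∈ range p, (1 + tanh ((x - i - 1) * c)) / 2| ≤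
      ∑ i ∈ range p, (1 - tanh (|x - i - 1| * c)) / 2 := by
  rw [min_floor_eq_sum_ite p hx, ← sum_sub_distrib]
  refine (abs_sum_le_sum_abs _ _).trans (sum_le_sum fun i _ => le_of_eq ?_)
  rw [← abs_of_pos hc, ← abs_mul, ← abs_ite_nonneg_sub_one_add_tanh_div_two, abs_of_pos hc]
  simp only [mul_nonneg_iff_of_pos_right hc]

lemma natCast_mul_exp_neg_two_mul_add_log_le (p : ℕ) {y : ℝ} (hy : 0 ≤ y) :
    p * exp (-(2 * (y + log p))) ≤ exp (-y) := by
  rcases p.eq_zero_or_pos with rfl | hp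
  · simpa using (exp_pos _).le
  have hp' : (1 : ℝ) ≤ p := by exact_mod_cast hp
  calc (p : ℝ) * exp (-(2 * (y + log p))) = exp (-(2 * y)) / p := by
        rw [show -(2 * (y + log p)) = -(2 * y) + -log p + -log p by ring, exp_add, exp_add,
          exp_neg (log p), exp_log (by positivity)]
        field_simp
    _ ≤ exp (-(2 * y)) := div_le_self (exp_pos _).le hp'
    _ ≤ exp (-y) := exp_le_exp.2 (by linarith)

lemma sum_one_sub_tanh_div_two_le_exp {p : ℕ} {s : Finset ℕ} (hs : s ⊆ range p) {x y lam : ℝ}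
    (hy : 0 ≤ y) (hlam : 0 < lam) (hfar : ∀ i ∈ s, 1 / lam ≤ |x - i - 1|) :
    ∑ i ∈ s, (1 - tanh (|x - i - 1| * ((y + log p) * lam))) / 2 ≤ exp (-y) := by
  have hL : 0 ≤ y + log p := add_nonneg hy (log_natCast_nonneg p)
  have hterm (i) (hi : i ∈ s) :
      (1 - tanh (|x - i - 1| * ((y + log p) * lam))) / 2 ≤ exp (-(2 * (y + log p))) := by
    refine (one_sub_tanh_div_two_le_exp _).trans (exp_le_exp.2 ?_)
    have : 1 ≤ |x - i - 1| * lam := (div_le_iff₀ hlam).1 (hfar i hi)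
    nlinarith
  calc _ ≤ #s • exp (-(2 * (y + log p))) := sum_le_card_nsmul _ _ _ hterm
    _ ≤ p * exp (-(2 * (y + log p))) := by
        rw [nsmul_eq_mul]
        gcongr
        simpa using card_le_card hs
    _ ≤ exp (-y) := natCast_mul_exp_neg_two_mul_add_log_le p hy

lemma card_filter_abs_sub_lt_le_one (s : Finset ℕ) (x : ℝ) {δ : ℝ} (hδ : 2 * δ ≤ 1) :
    #{i ∈ s | |x - (i : ℕ) - 1| < δ} ≤ 1 := by
  refine card_le_one.2 fun i hi j hj => ?_
  obtain ⟨hi₁, hi₂⟩ := abs_lt.1 (mem_filter.1 hi).2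
  obtain ⟨hj₁, hj₂⟩ := abs_lt.1 (mem_filter.1 hj).2
  have hij : (i : ℝ) < j + 1 := by linarith
  have hji : (j : ℝ) < i + 1 := by linarith
  norm_cast at hij hji
  omega

lemma le_abs_sub_of_far {p i : ℕ} (hi : i < p) {x δ : ℝ}
    (h : x < 1 - δ ∨ x > p + δ ∨ ∀ n : ℕ, δ ≤ |x - n|) : δ ≤ |x - i - 1| := by
  rcases h with h | h | h
  · exact le_abs.2 (Or.inr (by linarith [(Nat.cast_nonneg i : (0 : ℝ) ≤ i)]))
  · have : (i : ℝ) + 1 ≤ p := by exact_mod_cast hi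
    exact le_abs.2 (Or.inl (by linarith))
  · simpa [sub_sub] using h (i + 1)

lemma abs_min_floor_sub_sum_tanh_le (p : ℕ) {x y lam : ℝ} (hx : 0 ≤ x) (hy : 0 < y)
    (hlam : 0 < lam) :
    |min (p : ℝ) ⌊x⌋ - ∑ i ∈ range p, (1 + tanh ((x - i - 1) * (y + log p) * lam)) / 2| ≤
      #{i ∈ range p | |x - (i : ℕ) - 1| < 1 / lam} / 2 + exp (-y) := by
  have hc : 0 < (y + log p) * lam := mul_pos (by linarith [log_natCast_nonneg p]) hlam
  simp_rw [mul_assoc]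
  calc _ ≤ ∑ i ∈ range p, (1 - tanh (|x - i - 1| * ((y + log p) * lam))) / 2 :=
        abs_min_floor_sub_sum_le p hx hc
    _ = ∑ i ∈ range p with |x - (i : ℕ) - 1| < 1 / lam,
            (1 - tanh (|x - i - 1| * ((y + log p) * lam))) / 2 +
          ∑ i ∈ range p with ¬|x - (i : ℕ) - 1| < 1 / lam,
            (1 - tanh (|x - i - 1| * ((y + log p) * lam))) / 2 :=
        (sum_filter_add_sum_filter_not _ _ _).symm
    _ ≤ #{i ∈ range p | |x - (i : ℕ) - 1| < 1 / lam} • (1 / 2) + exp (-y) := by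
        gcongr
        · exact sum_le_card_nsmul _ _ _ fun i _ => one_sub_tanh_div_two_le_half (by positivity)
        · exact sum_one_sub_tanh_div_two_le_exp (filter_subset _ _) hy.le hlam
            fun i hi => not_lt.1 (mem_filter.1 hi).2
    _ = _ := by rw [nsmul_eq_mul]; ring

theorem sigmap_approx_intp (p : ℕ) (x y lam : ℝ) (hx : 0 ≤ x) (hy : 0 < y) (hlam : 2 < lam) :
    |min (p : ℝ) (⌊x⌋ : ℝ) -
        ∑ i ∈ Finset.range p,
          (1 + Real.tanh ((x - i - 1) * (y + Real.log p) * lam)) / 2| ≤ 1 / 2 + Real.exp (-y) ∧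
    ((x < 1 - 1 / lam ∨ x > p + 1 / lam ∨ ∀ n : ℕ, 1 / lam ≤ |x - n|) →
      |min (p : ℝ) (⌊x⌋ : ℝ) -
          ∑ i ∈ Finset.range p,
            (1 + Real.tanh ((x - i - 1) * (y + Real.log p) * lam)) / 2| ≤ Real.exp (-y)) := by
  have hlam₀ : 0 < lam := by linarith
  have hbound := abs_min_floor_sub_sum_tanh_le p hx hy hlam₀
  refine ⟨hbound.trans ?_, fun hfar => hbound.trans ?_⟩
  · have hδ : 2 * (1 / lam) ≤ 1 := by rw [mul_one_div, div_le_one hlam₀]; linarith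
    have hcard : (#{i ∈ range p | |x - (i : ℕ) - 1| < 1 / lam} : ℝ) ≤ 1 := by
      exact_mod_cast card_filter_abs_sub_lt_le_one (range p) x hδ
    linarith
  · rw [filter_false_of_mem fun i hi => not_lt.2 (le_abs_sub_of_far (mem_range.1 hi) hfar)]
    simp
end

section
/- Let d ∈ ℕ, K > 0, G a finite subset of ℝ^d, and f : G → ℝ. Define the Lagrange interpolation polynomial L_f(x) = Σ_{x̄ ∈ G} f(x̄) ∏_{i=1}^d ∏_{y ∈ G, y ≠ x̄} (x_i - y_i)/(x̄_i - y_i). Set δ = min over distinct x, x' ∈ G and coordinates i of |x_i - x'_i|, F = max_{x ∈ G} |f(x)|, M = K + max_{x ∈ G} ∥x∥_∞, and A = |G| · F · (M/δ)^{d(|G|-1)-1} · d(|G|-1)/δ. Then for all x, z ∈ [-K,K]^d, |L_f(x) - L_f(z)| ≤ A · ∥x - z∥_∞. -/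
/-!
Each Lagrange basis function is a product of `N = d (|G| - 1)` factors
`(x_i - b_i) / (a_i - b_i)`. For points of the cube `[-K, K]^d` every factor is bounded by
`M / δ`, and replacing `x` by `z` moves each factor by at most `‖x - z‖_∞ / δ`. Exchanging the
factors of a product one at a time shows that a product of `N` factors bounded by `C`, each moved
by at most `ε`, moves by at most `N C^(N-1) ε`; summing over the `|G|` nodes with weights
`|f| ≤ F` gives the bound.
-/

open Finset

section NormedRing

variable {ι R : Type*}

theorem norm_prod_sub_prod_le [NormedCommRing R] [NormOneClass R] (s : Finset ι)
    {u v : ι → R} {C ε : ℝ} (hu : ∀ k ∈ s, ‖u k‖ ≤ C) (hv : ∀ k ∈ s, ‖v k‖ ≤ C)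
    (huv : ∀ k ∈ s, ‖u k - v k‖ ≤ ε) :
    ‖∏ k ∈ s, u k - ∏ k ∈ s, v k‖ ≤ #s * C ^ (#s - 1) * ε := by
  induction s using Finset.cons_induction with
  | empty => simp
  | cons a s _ ih =>
    have hC : 0 ≤ C := (norm_nonneg _).trans (hv a (mem_cons_self a s))
    have hε : 0 ≤ ε := (norm_nonneg _).trans (huv a (mem_cons_self a s))
    have hprod : ‖∏ k ∈ s, u k‖ ≤ C ^ #s :=
      (Finset.norm_prod_le s u).trans <| (prod_le_prod (fun _ _ => norm_nonneg _)
        fun k hk => hu k (mem_cons_of_mem hk)).trans_eq (prod_const C)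
    have hrest := ih (fun k hk => hu k (mem_cons_of_mem hk))
      (fun k hk => hv k (mem_cons_of_mem hk)) (fun k hk => huv k (mem_cons_of_mem hk))
    have hpow : C * (#s * C ^ (#s - 1)) = #s * C ^ #s := by
      rcases #s with _ | n
      · simp
      · rw [Nat.add_sub_cancel, pow_succ]; ring
    rw [prod_cons, prod_cons, card_cons, Nat.add_sub_cancel]
    calc ‖u a * ∏ k ∈ s, u k - v a * ∏ k ∈ s, v k‖
        = ‖(u a - v a) * ∏ k ∈ s, u k + v a * (∏ k ∈ s, u k - ∏ k ∈ s, v k)‖ := by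
          congr 1; ring
      _ ≤ ‖u a - v a‖ * ‖∏ k ∈ s, u k‖
          + ‖v a‖ * ‖∏ k ∈ s, u k - ∏ k ∈ s, v k‖ :=
          norm_add_le_of_le (norm_mul_le _ _) (norm_mul_le _ _)
      _ ≤ ε * C ^ #s + C * (#s * C ^ (#s - 1) * ε) := by
          gcongr
          exacts [huv a (mem_cons_self a s), hv a (mem_cons_self a s)]
      _ = ((#s + 1 : ℕ) : ℝ) * C ^ #s * ε := by
          rw [← mul_assoc, hpow]; push_cast; ring

theorem norm_sum_mul_sub_sum_mul_le [SeminormedRing R] (s : Finset ι) {c u v : ι → R}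
    {F B : ℝ} (hc : ∀ k ∈ s, ‖c k‖ ≤ F) (huv : ∀ k ∈ s, ‖u k - v k‖ ≤ B) :
    ‖∑ k ∈ s, c k * u k - ∑ k ∈ s, c k * v k‖ ≤ #s * (F * B) := by
  rw [← sum_sub_distrib]
  calc ‖∑ k ∈ s, (c k * u k - c k * v k)‖ ≤ ∑ k ∈ s, ‖c k * (u k - v k)‖ := by
        simp only [mul_sub]; exact norm_sum_le _ _
    _ ≤ #s * (F * B) := by
        refine (sum_le_card_nsmul _ _ _ fun k hk => ?_).trans_eq (nsmul_eq_mul _ _)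
        have hF : 0 ≤ F := (norm_nonneg _).trans (hc k hk)
        exact (norm_mul_le _ _).trans (mul_le_mul (hc k hk) (huv k hk) (norm_nonneg _) hF)

end NormedRing

noncomputable def lagrangeBasis {d : ℕ} (G : Finset (Fin d → ℝ)) (a x : Fin d → ℝ) : ℝ :=
  ∏ i, ∏ b ∈ G.erase a, (x i - b i) / (a i - b i)

theorem abs_lagrangeBasis_sub_le {d : ℕ} {G : Finset (Fin d → ℝ)} {a x z : Fin d → ℝ}
    {δ M S : ℝ} (hδ : 0 < δ) (hsep : ∀ b ∈ G.erase a, ∀ i, δ ≤ |a i - b i|)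
    (hx : ∀ b ∈ G, ∀ i, |x i - b i| ≤ M) (hz : ∀ b ∈ G, ∀ i, |z i - b i| ≤ M)
    (hxz : ∀ i, |x i - z i| ≤ S) :
    |lagrangeBasis G a x - lagrangeBasis G a z| ≤
      (d * #(G.erase a) : ℕ) * (M / δ) ^ (d * #(G.erase a) - 1) * (S / δ) := by
  have hfactor : ∀ w : Fin d → ℝ, (∀ b ∈ G, ∀ i, |w i - b i| ≤ M) →
      ∀ p ∈ (univ : Finset (Fin d)) ×ˢ G.erase a,
        ‖(w p.1 - p.2 p.1) / (a p.1 - p.2 p.1)‖ ≤ M / δ := by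
    rintro w hw ⟨i, b⟩ hp
    rw [mem_product] at hp
    have hwb := hw b (mem_of_mem_erase hp.2) i
    rw [Real.norm_eq_abs, abs_div]
    exact div_le_div₀ ((abs_nonneg _).trans hwb) hwb hδ (hsep b hp.2 i)
  have hmove : ∀ p ∈ (univ : Finset (Fin d)) ×ˢ G.erase a,
      ‖(x p.1 - p.2 p.1) / (a p.1 - p.2 p.1) - (z p.1 - p.2 p.1) / (a p.1 - p.2 p.1)‖
        ≤ S / δ := by
    rintro ⟨i, b⟩ hp
    rw [mem_product] at hp
    rw [← sub_div, sub_sub_sub_cancel_right, Real.norm_eq_abs, abs_div]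
    exact div_le_div₀ ((abs_nonneg _).trans (hxz i)) (hxz i) hδ (hsep b hp.2 i)
  have h := norm_prod_sub_prod_le _ (hfactor x hx) (hfactor z hz) hmove
  rwa [prod_product, prod_product, card_product, card_univ, Fintype.card_fin,
    Real.norm_eq_abs] at h

theorem lagrange_lipschitz_general (d : ℕ) (K : ℝ) (G : Finset (Fin d → ℝ))
    (f : (Fin d → ℝ) → ℝ) (δ F M : ℝ) (hδ : 0 < δ)
    (hsep : ∀ a ∈ G, ∀ b ∈ G, a ≠ b → ∀ i, δ ≤ |a i - b i|)
    (hF : ∀ a ∈ G, |f a| ≤ F)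
    (hM : ∀ a ∈ G, ∀ i, |a i| ≤ M - K)
    (x z : Fin d → ℝ) (hx : ∀ i, x i ∈ Set.Icc (-K) K) (hz : ∀ i, z i ∈ Set.Icc (-K) K) :
    |(∑ a ∈ G, f a * ∏ i, ∏ b ∈ G.erase a, (x i - b i) / (a i - b i)) -
     (∑ a ∈ G, f a * ∏ i, ∏ b ∈ G.erase a, (z i - b i) / (a i - b i))| ≤
      (G.card : ℝ) * F * (M / δ) ^ (d * (G.card - 1) - 1) * (d * (G.card - 1)) / δ *
        (⨆ i, |x i - z i|) := by
  rcases G.eq_empty_or_nonempty with rfl | hG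
  · simp
  have hnode : ∀ w : Fin d → ℝ, (∀ i, w i ∈ Set.Icc (-K) K) → ∀ b ∈ G, ∀ i, |w i - b i| ≤ M :=
    fun w hw b hb i => (abs_sub _ _).trans (by linarith [abs_le.2 (hw i), hM b hb i])
  have hxz : ∀ i, |x i - z i| ≤ ⨆ i, |x i - z i| := le_ciSup (Finite.bddAbove_range _)
  have hbasis : ∀ a ∈ G, ‖lagrangeBasis G a x - lagrangeBasis G a z‖ ≤
      (d * (#G - 1) : ℕ) * (M / δ) ^ (d * (#G - 1) - 1) * ((⨆ i, |x i - z i|) / δ) := by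
    intro a ha
    rw [← card_erase_of_mem ha]
    exact abs_lagrangeBasis_sub_le hδ
      (fun b hb => hsep a ha b (mem_of_mem_erase hb) (ne_of_mem_erase hb).symm)
      (hnode x hx) (hnode z hz) hxz
  refine (norm_sum_mul_sub_sum_mul_le G hF hbasis).trans_eq ?_
  push_cast [Nat.cast_sub hG.card_pos]
  ring

theorem lagrange_lipschitz (d : ℕ) (K : ℝ) (hK : 0 < K) (G : Finset (Fin d → ℝ))
    (f : (Fin d → ℝ) → ℝ) (δ F M : ℝ) (hδ : 0 < δ)
    (hsep : ∀ a ∈ G, ∀ b ∈ G, a ≠ b → ∀ i, δ ≤ |a i - b i|)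
    (hF : ∀ a ∈ G, |f a| ≤ F)
    (hM : ∀ a ∈ G, ∀ i, |a i| ≤ M - K)
    (x z : Fin d → ℝ) (hx : ∀ i, x i ∈ Set.Icc (-K) K) (hz : ∀ i, z i ∈ Set.Icc (-K) K) :
    |(∑ a ∈ G, f a * ∏ i, ∏ b ∈ G.erase a, (x i - b i) / (a i - b i)) -
     (∑ a ∈ G, f a * ∏ i, ∏ b ∈ G.erase a, (z i - b i) / (a i - b i))| ≤
      (G.card : ℝ) * F * (M / δ) ^ (d * (G.card - 1) - 1) * (d * (G.card - 1)) / δ *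
        (⨆ i, |x i - z i|) :=
  lagrange_lipschitz_general d K G f δ F M hδ hsep hF hM x z hx hz
end

section
/- Let d ∈ ℕ, K > 0, G a finite subset of ℝ^d, f : G → ℝ, and L_f the Lagrange interpolation polynomial of f. With δ, F, M as defined (δ = minimal coordinate-wise gap between distinct points of G, F = max |f| on G, M = K + max_{x∈G} ∥x∥_∞), for all x ∈ [-K,K]^d: |L_f(x)| ≤ |G| · F · (M/δ)^{d(|G|-1)}. -/
/-! Each term of the interpolant is `f a` times a product of `d (|G| - 1)` factors
`(x i - b i) / (a i - b i)`; the numerator is at most `K + (M - K) = M` in absolute value and the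
denominator at least `δ`, so every term is at most `F (M / δ) ^ (d (|G| - 1))`. -/

open Finset

section

variable {ι R : Type*} [CommRing R] [LinearOrder R] [IsStrictOrderedRing R]

theorem Finset.abs_prod_le_pow_card (s : Finset ι) (g : ι → R) (C : R)
    (h : ∀ i ∈ s, |g i| ≤ C) : |∏ i ∈ s, g i| ≤ C ^ #s := by
  rw [abs_prod, ← prod_const]
  exact prod_le_prod (fun _ _ ↦ abs_nonneg _) h

theorem Finset.abs_sum_le_card_mul (s : Finset ι) (g : ι → R) (C : R)
    (h : ∀ i ∈ s, |g i| ≤ C) : |∑ i ∈ s, g i| ≤ #s * C :=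
  (abs_sum_le_sum_abs g s).trans <| by simpa using sum_le_card_nsmul s _ C h

end

theorem abs_prod_prod_div_le {ι : Type*} [Fintype ι] (s : Finset (ι → ℝ)) (a x : ι → ℝ)
    {δ M : ℝ} (hδ : 0 < δ) (hsep : ∀ b ∈ s, ∀ i, δ ≤ |a i - b i|)
    (hdist : ∀ b ∈ s, ∀ i, |x i - b i| ≤ M) :
    |∏ i, ∏ b ∈ s, (x i - b i) / (a i - b i)| ≤ (M / δ) ^ (Fintype.card ι * #s) := by
  rw [mul_comm, pow_mul, ← card_univ]
  refine abs_prod_le_pow_card _ _ _ fun i _ ↦ abs_prod_le_pow_card _ _ _ fun b hb ↦ ?_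
  rw [abs_div]
  exact div_le_div₀ ((abs_nonneg _).trans (hdist b hb i)) (hdist b hb i) hδ (hsep b hb i)

theorem lagrange_bound_general (d : ℕ) (K : ℝ) (G : Finset (Fin d → ℝ))
    (f : (Fin d → ℝ) → ℝ) (δ F M : ℝ) (hδ : 0 < δ)
    (hsep : ∀ a ∈ G, ∀ b ∈ G, a ≠ b → ∀ i, δ ≤ |a i - b i|)
    (hF : ∀ a ∈ G, |f a| ≤ F)
    (hM : ∀ a ∈ G, ∀ i, |a i| ≤ M - K)
    (x : Fin d → ℝ) (hx : ∀ i, x i ∈ Set.Icc (-K) K) :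
    |∑ a ∈ G, f a * ∏ i, ∏ b ∈ G.erase a, (x i - b i) / (a i - b i)| ≤
      (G.card : ℝ) * F * (M / δ) ^ (d * (G.card - 1)) := by
  have hdist : ∀ b ∈ G, ∀ i, |x i - b i| ≤ M := fun b hb i ↦
    calc |x i - b i| ≤ |x i| + |b i| := abs_sub _ _
      _ ≤ K + (M - K) := add_le_add (abs_le.2 (hx i)) (hM b hb i)
      _ = M := by ring
  rw [mul_assoc]
  refine abs_sum_le_card_mul _ _ _ fun a ha ↦ ?_
  have hbasis := abs_prod_prod_div_le (G.erase a) a x hδ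
    (fun b hb ↦ hsep a ha b (mem_of_mem_erase hb) (ne_of_mem_erase hb).symm)
    (fun b hb ↦ hdist b (mem_of_mem_erase hb))
  rw [Fintype.card_fin, card_erase_of_mem ha] at hbasis
  rw [abs_mul]
  exact mul_le_mul (hF a ha) hbasis (abs_nonneg _) ((abs_nonneg _).trans (hF a ha))

theorem lagrange_bound (d : ℕ) (K : ℝ) (hK : 0 < K) (G : Finset (Fin d → ℝ))
    (f : (Fin d → ℝ) → ℝ) (δ F M : ℝ) (hδ : 0 < δ)
    (hsep : ∀ a ∈ G, ∀ b ∈ G, a ≠ b → ∀ i, δ ≤ |a i - b i|)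
    (hF : ∀ a ∈ G, |f a| ≤ F)
    (hM : ∀ a ∈ G, ∀ i, |a i| ≤ M - K)
    (x : Fin d → ℝ) (hx : ∀ i, x i ∈ Set.Icc (-K) K) :
    |∑ a ∈ G, f a * ∏ i, ∏ b ∈ G.erase a, (x i - b i) / (a i - b i)| ≤
      (G.card : ℝ) * F * (M / δ) ^ (d * (G.card - 1)) :=
  lagrange_bound_general d K G f δ F M hδ hsep hF hM x hx
end

section
/- Let T, λ > 0, φ : [0,T] → ℝ continuous and nonnegative with ∫₀ᵀ φ > 0, A ≥ λ/∫₀ᵀ φ, g ∈ ℝ, η ≥ 0, and ḡ : [0,T] → ℝ with |ḡ(t) - g| ≤ η for all t. Suppose x solves x'(t) = A·φ(t)·(ḡ(t) - x(t)) on [0,T] with x(0) = x₀. Then |x(T) - g| ≤ η(1 + e^{-λ}) + |x₀ - g|·e^{-λ}. -/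
/-!
With `Φ(t) = ∫₀ᵗ φ`, the integrating factor `exp (A Φ)` turns the equation into
`((x - c) · exp (A Φ))' = A φ exp (A Φ) (ḡ - c)`. Since `g - η ≤ ḡ ≤ g + η`, this is monotone for
`c = g - η` and antitone for `c = g + η`, so `x T` is squeezed between the two constant levels
up to the contraction factor `exp (-A Φ(T)) ≤ exp (-λ)`.
-/

open Set

theorem sub_le_mul_exp_of_hasDerivAt_relax {k Ψ gbar x : ℝ → ℝ} {a b c : ℝ} (hab : a ≤ b)
    (hΨ : ∀ t ∈ Icc a b, HasDerivAt Ψ (k t) t) (hk : ∀ t ∈ Icc a b, 0 ≤ k t)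
    (hg : ∀ t ∈ Icc a b, gbar t ≤ c)
    (hx : ∀ t ∈ Icc a b, HasDerivAt x (k t * (gbar t - x t)) t) :
    x b - c ≤ (x a - c) * Real.exp (Ψ a - Ψ b) := by
  have hderiv : ∀ t ∈ Icc a b, HasDerivAt (fun s ↦ (x s - c) * Real.exp (Ψ s))
      (k t * Real.exp (Ψ t) * (gbar t - c)) t := fun t ht ↦
    (((hx t ht).sub_const c).mul (hΨ t ht).exp).congr_deriv (by ring)
  have hanti : AntitoneOn (fun s ↦ (x s - c) * Real.exp (Ψ s)) (Icc a b) := by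
    refine antitoneOn_of_hasDerivWithinAt_nonpos (convex_Icc a b)
      (fun t ht ↦ (hderiv t ht).continuousAt.continuousWithinAt)
      (fun t ht ↦ (hderiv t (interior_subset ht)).hasDerivWithinAt) fun t ht ↦ ?_
    have ht' := interior_subset ht
    exact mul_nonpos_of_nonneg_of_nonpos (by have := hk t ht'; positivity)
      (sub_nonpos.mpr (hg t ht'))
  have hend := hanti (left_mem_Icc.mpr hab) (right_mem_Icc.mpr hab) hab
  rw [Real.exp_sub, mul_div_assoc', le_div_iff₀ (Real.exp_pos _)]
  exact hend

theorem abs_le_of_sub_le_mul_of_neg_sub_le_mul {y y₀ η κ κ' : ℝ} (hη : 0 ≤ η) (hκ : 0 ≤ κ)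
    (hκκ' : κ ≤ κ') (hup : y - η ≤ (y₀ - η) * κ) (hlo : -y - η ≤ (-y₀ - η) * κ) :
    |y| ≤ η * (1 + κ') + |y₀| * κ' := by
  have hy₀κ : |y₀| * κ ≤ |y₀| * κ' := mul_le_mul_of_nonneg_left hκκ' (abs_nonneg y₀)
  rw [abs_le]
  constructor <;> nlinarith [le_abs_self y₀, neg_abs_le y₀]

theorem reach_perturbed (T lam A g η x₀ : ℝ) (hT : 0 < T) (hlam : 0 < lam) (hη : 0 ≤ η)
    (φ : ℝ → ℝ) (hφ : Continuous φ) (hφpos : ∀ t ∈ Set.Icc (0 : ℝ) T, 0 ≤ φ t)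
    (hint : 0 < ∫ u in (0 : ℝ)..T, φ u)
    (hA : lam / ∫ u in (0 : ℝ)..T, φ u ≤ A)
    (gbar : ℝ → ℝ) (hgbar : ∀ t ∈ Set.Icc (0 : ℝ) T, |gbar t - g| ≤ η)
    (x : ℝ → ℝ) (hx0 : x 0 = x₀)
    (hx : ∀ t ∈ Set.Icc (0 : ℝ) T, HasDerivAt x (A * φ t * (gbar t - x t)) t) :
    |x T - g| ≤ η * (1 + Real.exp (-lam)) + |x₀ - g| * Real.exp (-lam) := by
  set Ψ : ℝ → ℝ := fun t ↦ A * ∫ u in (0 : ℝ)..t, φ u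
  have hΨ : ∀ t ∈ Icc 0 T, HasDerivAt Ψ (A * φ t) t := fun t _ ↦
    (intervalIntegral.integral_hasDerivAt_right (hφ.intervalIntegrable 0 t)
      (hφ.stronglyMeasurableAtFilter _ _) hφ.continuousAt).const_mul A
  have hA0 : 0 ≤ A := (div_pos hlam hint).le.trans hA
  have hk : ∀ t ∈ Icc 0 T, 0 ≤ A * φ t := fun t ht ↦ mul_nonneg hA0 (hφpos t ht)
  have hcontract : Real.exp (Ψ 0 - Ψ T) ≤ Real.exp (-lam) := by
    have : lam ≤ A * ∫ u in (0 : ℝ)..T, φ u := (div_le_iff₀ hint).mp hA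
    simp only [Ψ, intervalIntegral.integral_same, mul_zero, zero_sub, Real.exp_le_exp]
    linarith
  have hup := sub_le_mul_exp_of_hasDerivAt_relax (c := g + η) hT.le hΨ hk
    (fun t ht ↦ by linarith [(abs_le.mp (hgbar t ht)).2]) hx
  -- `-x` solves the same equation with forcing `-ḡ ≤ η - g`.
  have hlo := sub_le_mul_exp_of_hasDerivAt_relax (x := -x) (gbar := -gbar) (c := η - g)
    hT.le hΨ hk
    (fun t ht ↦ by simp only [Pi.neg_apply]; linarith [(abs_le.mp (hgbar t ht)).1])
    (fun t ht ↦ (hx t ht).neg.congr_deriv (by simp only [Pi.neg_apply]; ring))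
  subst hx0
  simp only [Pi.neg_apply] at hlo
  exact abs_le_of_sub_le_mul_of_neg_sub_le_mul hη (Real.exp_pos _).le hcontract
    (by linarith) (by linarith)
end
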